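/- arXiv:math/0303137 — 4 statements merged into one kernel-verified Lean document; each statement's English description precedes it below -/
import Mathlib

section
/- Let n > 2 and α > 0. There exists A ≥ 2 (depending on n, α) such that the function v(x) = (log(A+|x|²))^(−α) on ℝⁿ satisfies −Δv(x) ≥ (α(n−2)/A) · (log(A+|x|²))^(−α−1) · (1+|x|²)^(−1) for all x ∈ ℝⁿ. -/
/-!
For a radial profile, `Δ (g ∘ ‖·‖²) = 2n g'(‖x‖²) + 4‖x‖² g''(‖x‖²)`. With `g(t) = log(A + t)^(-α)`,
`L = log(A + |x|²)` and `u = A + |x|²` this gives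
`-Δv = α L^(-α-2) (2nLu - 4|x|²(α + 1 + L)) / u²`.
Taking `A ≥ exp(4(α + 1)/(n - 2))` forces `4(α + 1) ≤ (n - 2)L`, so the bracket is at least `(n - 2)Lu`,
and `u ≤ A(1 + |x|²)` gives the bound.
-/

open Real

/-- The Euclidean Laplacian of a function on `ℝⁿ`. -/
noncomputable def laplacian {n : ℕ} (f : EuclideanSpace ℝ (Fin n) → ℝ)
    (x : EuclideanSpace ℝ (Fin n)) : ℝ :=
  ∑ i, fderiv ℝ (fun y => fderiv ℝ f y (EuclideanSpace.single i 1)) x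
    (EuclideanSpace.single i 1)

section RadialLaplacian

variable {n : ℕ}

local notation "E" => EuclideanSpace ℝ (Fin n)

theorem hasFDerivAt_comp_norm_sq {g : ℝ → ℝ} {d : ℝ} {x : E}
    (hg : HasDerivAt g d (‖x‖ ^ 2)) :
    HasFDerivAt (fun y : E => g (‖y‖ ^ 2)) ((2 * d) • innerSL ℝ x) x := by
  refine (hg.comp_hasFDerivAt x (hasStrictFDerivAt_norm_sq x).hasFDerivAt).congr_fderiv ?_
  rw [two_nsmul, smul_add, two_mul, add_smul]

variable {g g' g'' : ℝ → ℝ}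

theorem fderiv_comp_norm_sq_single (hg : ∀ t, 0 ≤ t → HasDerivAt g (g' t) t) (y : E)
    (i : Fin n) :
    fderiv ℝ (fun z : E => g (‖z‖ ^ 2)) y (EuclideanSpace.single i 1) =
      2 * g' (‖y‖ ^ 2) * y i := by
  rw [(hasFDerivAt_comp_norm_sq (hg _ (sq_nonneg _))).fderiv]
  simp [EuclideanSpace.inner_single_right]

theorem laplacian_comp_norm_sq (hg : ∀ t, 0 ≤ t → HasDerivAt g (g' t) t)
    (hg' : ∀ t, 0 ≤ t → HasDerivAt g' (g'' t) t) (x : E) :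
    laplacian (fun y => g (‖y‖ ^ 2)) x =
      2 * n * g' (‖x‖ ^ 2) + 4 * ‖x‖ ^ 2 * g'' (‖x‖ ^ 2) := by
  have hsecond (i : Fin n) :
      fderiv ℝ (fun y => fderiv ℝ (fun z : E => g (‖z‖ ^ 2)) y (EuclideanSpace.single i 1)) x
        (EuclideanSpace.single i 1) = 2 * g' (‖x‖ ^ 2) + 4 * g'' (‖x‖ ^ 2) * x i ^ 2 := by
    simp only [fderiv_comp_norm_sq_single hg]
    have h : HasFDerivAt (fun y : E => 2 * g' (‖y‖ ^ 2) * y i) _ x :=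
      ((hasFDerivAt_comp_norm_sq (hg' _ (sq_nonneg _))).const_mul 2).mul
        (EuclideanSpace.proj i : E →L[ℝ] ℝ).hasFDerivAt
    rw [h.fderiv]
    simp only [add_apply, smul_apply, PiLp.proj_apply, PiLp.single_eq_same, smul_eq_mul,
      mul_one, coe_innerSL_apply, EuclideanSpace.inner_single_right, one_mul, conj_trivial]
    ring
  simp only [laplacian, hsecond, Finset.sum_add_distrib, ← Finset.mul_sum,
    ← EuclideanSpace.real_norm_sq_eq, Finset.sum_const, Finset.card_univ, Fintype.card_fin,
    nsmul_eq_mul]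
  ring

end RadialLaplacian

theorem hasDerivAt_log_rpow (p : ℝ) {s : ℝ} (hs : 1 < s) :
    HasDerivAt (fun s => log s ^ p) (p * log s ^ (p - 1) / s) s := by
  refine ((hasDerivAt_log (by positivity)).rpow_const (Or.inl (log_pos hs).ne')).congr_deriv ?_
  ring

theorem hasDerivAt_deriv_log_rpow (p : ℝ) {s : ℝ} (hs : 1 < s) :
    HasDerivAt (fun s => p * log s ^ (p - 1) / s)
      (p * log s ^ (p - 2) * (p - 1 - log s) / s ^ 2) s := by
  have hL := log_pos hs
  have h : HasDerivAt (fun s => p * log s ^ (p - 1) / s) _ s :=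
    ((hasDerivAt_log_rpow (p - 1) hs).const_mul p).div (hasDerivAt_id s) (by positivity)
  refine h.congr_deriv ?_
  rw [show p - 1 = p - 2 + 1 by ring, rpow_add_one hL.ne', show p - 2 + 1 - 1 = p - 2 by ring]
  field_simp

theorem laplacian_log_add_norm_sq_rpow {n : ℕ} (p : ℝ) {A : ℝ} (hA : 1 < A)
    (x : EuclideanSpace ℝ (Fin n)) :
    laplacian (fun y => log (A + ‖y‖ ^ 2) ^ p) x =
      p * log (A + ‖x‖ ^ 2) ^ (p - 2) *
        (2 * n * log (A + ‖x‖ ^ 2) * (A + ‖x‖ ^ 2)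
          + 4 * ‖x‖ ^ 2 * (p - 1 - log (A + ‖x‖ ^ 2))) / (A + ‖x‖ ^ 2) ^ 2 := by
  have hs (t : ℝ) (ht : 0 ≤ t) : 1 < A + t := by linarith
  rw [laplacian_comp_norm_sq (g := fun t => log (A + t) ^ p)
    (fun t ht => (hasDerivAt_log_rpow p (hs t ht)).comp_const_add A t)
    (fun t ht => (hasDerivAt_deriv_log_rpow p (hs t ht)).comp_const_add A t)]
  have hu : 0 < A + ‖x‖ ^ 2 := by linarith [hs _ (sq_nonneg ‖x‖)]
  rw [show p - 1 = p - 2 + 1 by ring, rpow_add_one (log_pos (hs _ (sq_nonneg ‖x‖))).ne']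
  field_simp

theorem log_barrier_bound {n α A r L : ℝ} (hα : 0 ≤ α) (hA : 1 ≤ A) (hr : 0 ≤ r) (hL : 0 < L)
    (hLn : 4 * (α + 1) ≤ (n - 2) * L) :
    α * (n - 2) / A * L ^ (-α - 1) * (1 + r)⁻¹ ≤
      α * L ^ (-α - 2) * (2 * n * L * (A + r) - 4 * r * (α + 1 + L)) / (A + r) ^ 2 := by
  have hn : 0 ≤ (n - 2) * L := by linarith
  have hu : 0 < A + r := by linarith
  have hpow : L ^ (-α - 1) = L ^ (-α - 2) * L := by
    rw [show -α - 1 = -α - 2 + 1 by ring, rpow_add_one hL.ne']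
  have hbracket : (n - 2) * L * (A + r) ≤ 2 * n * L * (A + r) - 4 * r * (α + 1 + L) := by
    nlinarith
  calc α * (n - 2) / A * L ^ (-α - 1) * (1 + r)⁻¹
      = α * L ^ (-α - 2) * ((n - 2) * L) / (A * (1 + r)) := by
        rw [hpow]; field_simp
    _ ≤ α * L ^ (-α - 2) * ((n - 2) * L) / (A + r) := by
        gcongr
        nlinarith
    _ = α * L ^ (-α - 2) * ((n - 2) * L * (A + r)) / (A + r) ^ 2 := by
        field_simp
    _ ≤ α * L ^ (-α - 2) * (2 * n * L * (A + r) - 4 * r * (α + 1 + L)) / (A + r) ^ 2 := by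
        gcongr

/-- For `n > 2`, `α > 0`, there is `A ≥ 2` such that
`v(x) = (log(A+|x|²))^(−α)` satisfies
`−Δv ≥ (α(n−2)/A)(log(A+|x|²))^(−α−1)(1+|x|²)^(−1)` on all of `ℝⁿ`. -/
theorem neg_laplacian_log_barrier (n : ℕ) (hn : 2 < n) (α : ℝ) (hα : 0 < α) :
    ∃ A : ℝ, 2 ≤ A ∧
      ∀ x : EuclideanSpace ℝ (Fin n),
        -laplacian (fun y => (Real.log (A + ‖y‖ ^ 2)) ^ (-α)) x ≥
          α * ((n : ℝ) - 2) / A * (Real.log (A + ‖x‖ ^ 2)) ^ (-α - 1) *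
            (1 + ‖x‖ ^ 2)⁻¹ := by
  have hn2 : (0 : ℝ) < n - 2 := sub_pos.mpr (by exact_mod_cast hn)
  set A := max 2 (exp (4 * (α + 1) / (n - 2)))
  have hA : 2 ≤ A := le_max_left _ _
  refine ⟨A, hA, fun x => ?_⟩
  have hu : 1 < A + ‖x‖ ^ 2 := by linarith [sq_nonneg ‖x‖]
  have hLn : 4 * (α + 1) ≤ (n - 2) * log (A + ‖x‖ ^ 2) := by
    rw [← div_le_iff₀' hn2, le_log_iff_exp_le (by linarith)]
    exact (le_max_right _ _).trans (le_add_of_nonneg_right (sq_nonneg _))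
  rw [laplacian_log_add_norm_sq_rpow (-α) (by linarith) x, ge_iff_le]
  refine (log_barrier_bound hα.le (by linarith) (sq_nonneg _) (log_pos hu) hLn).trans_eq ?_
  ring
end

section
/- Let M be a complex manifold with two conformal Hermitian metrics γ = f δ_{αβ̄} and γ̃ = f̃ δ_{αβ̄} (f, f̃ smooth positive real-valued functions) on an open set of ℂᵐ. Then the norm of the tension field of the identity map id : (M,γ) → (M,γ̃) is ‖σ(id)‖ = ((m−1)/(2f)) |∇√f̃|. In particular if f = f̃, then ‖σ(id)‖ = ((m−1)/2) |∇(1/√f)|. -/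
open Real

noncomputable section

/-!
The identity map has constant Wirtinger coefficients `T^{jk}`, a Hermitian matrix with
`T + Tᵀ = ½ I` and trace `m/2`. Contracting them against the conformal Christoffel symbols
`Γ^ℓ_{jk} = (δ_{ℓj}∂_k f̃ + δ_{ℓk}∂_j f̃ − δ_{jk}∂_ℓ f̃)/(2f̃)` therefore leaves
`(1/2 − m/2)∂_ℓ f̃ / (2f̃)`, so `σ(id) = (1 − m)/(4 f f̃) ∇f̃`. Its `f̃`-norm is
`(m − 1)/(4 f f̃) √f̃ |∇f̃|`, and the chain rule `∇√f̃ = ∇f̃/(2√f̃)`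
(resp. `∇(1/√f) = −∇f/(2f√f)` when `f = f̃`) turns this into the stated formulas.
-/

/-- `ℂᵐ` viewed as `ℝ^{2m}`, with real coordinates indexed by `Fin m × Fin 2`
(the pair `(α, 0)`/`(α, 1)` being the real/imaginary part of `z_α`). -/
abbrev Cm (m : ℕ) := EuclideanSpace ℝ (Fin m × Fin 2)

/-- The coefficients `T^{jk} = Σ_α (∂ id^j/∂z^α)(∂ id^k/∂z̄^α)` for the
identity map in Wirtinger coordinates: the `2×2` block `(1/4)[[1, i],[−i, 1]]`
on each complex coordinate. -/
def idWirtinger (m : ℕ) (j k : Fin m × Fin 2) : ℂ :=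
  if j.1 = k.1 then
    (1 / 4) * (if j.2 = k.2 then 1 else if j.2 = 0 then Complex.I else -Complex.I)
  else 0

/-- Partial derivative of a scalar function in the `i`-th coordinate
direction. -/
def pderiv' {m : ℕ} (h : Cm m → ℝ) (i : Fin m × Fin 2) (x : Cm m) : ℝ :=
  fderiv ℝ h x (EuclideanSpace.single i 1)

/-- Christoffel symbols of the conformal metric `f̃ δ` on `ℝ^{2m}`:
`Γ^ℓ_{jk} = (1/(2f̃))(δ_{ℓj}∂_k f̃ + δ_{ℓk}∂_j f̃ − δ_{jk}∂_ℓ f̃)`. -/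
def confChristoffel {m : ℕ} (ft : Cm m → ℝ) (l j k : Fin m × Fin 2) (x : Cm m) : ℝ :=
  (1 / (2 * ft x)) *
    ((if l = j then pderiv' ft k x else 0) + (if l = k then pderiv' ft j x else 0)
      - (if j = k then pderiv' ft l x else 0))

/-- The tension field of the identity map `id : (ℂᵐ, fδ) → (ℂᵐ, f̃δ)`:
`σ(id)^ℓ = γ^{αβ̄}Γ^ℓ_{jk} ∂id^j/∂z^α ∂id^k/∂z̄^β = (1/f) Σ_{j,k} Γ^ℓ_{jk} T^{jk}`. -/
def tensionId {m : ℕ} (f ft : Cm m → ℝ) (l : Fin m × Fin 2) (x : Cm m) : ℂ :=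
  ((1 / f x : ℝ) : ℂ) *
    ∑ j, ∑ k, ((confChristoffel ft l j k x : ℝ) : ℂ) * idWirtinger m j k

theorem HasDerivAt.gradient_comp {F : Type*} [NormedAddCommGroup F] [InnerProductSpace ℝ F]
    [CompleteSpace F] {φ : ℝ → ℝ} {h : F → ℝ} {x : F} {c : ℝ}
    (hφ : HasDerivAt φ c (h x)) (hh : DifferentiableAt ℝ h x) :
    gradient (fun y => φ (h y)) x = c • gradient h x := by
  have hcomp : HasFDerivAt (fun y => φ (h y)) (c • fderiv ℝ h x) x :=
    hφ.comp_hasFDerivAt x hh.hasFDerivAt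
  rw [gradient, gradient, hcomp.fderiv, map_smul]

theorem pderiv'_eq_gradient {m : ℕ} (h : Cm m → ℝ) (i : Fin m × Fin 2) (x : Cm m) :
    pderiv' h i x = gradient h x i := by
  rw [pderiv', ← inner_gradient_left, EuclideanSpace.inner_single_right, one_mul]
  rfl

theorem sum_sum_conformal_contraction {ι R : Type*} [Fintype ι] [DecidableEq ι] [CommRing R]
    (a : ι → R) (T : ι → ι → R) (l : ι) :
    ∑ j, ∑ k, ((if l = j then a k else 0) + (if l = k then a j else 0)
      - (if j = k then a l else 0)) * T j k
      = ∑ k, a k * (T l k + T k l) - a l * ∑ j, T j j := by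
  simp only [add_mul, sub_mul, ite_mul, zero_mul, Finset.sum_add_distrib, Finset.sum_sub_distrib,
    Finset.sum_ite_eq, Finset.sum_ite_irrel, Finset.sum_const_zero,
    Finset.mem_univ, if_true, mul_add, Finset.mul_sum]

theorem idWirtinger_add_swap (m : ℕ) (j k : Fin m × Fin 2) :
    idWirtinger m j k + idWirtinger m k j = if j = k then 1 / 2 else 0 := by
  obtain ⟨α, a⟩ := j
  obtain ⟨β, b⟩ := k
  by_cases hαβ : α = β
  · subst hαβ
    fin_cases a <;> fin_cases b <;> simp [idWirtinger] <;> norm_num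
  · simp [idWirtinger, hαβ, Ne.symm hαβ]

theorem sum_idWirtinger_diag (m : ℕ) : ∑ j, idWirtinger m j j = m / 2 := by
  simp only [idWirtinger, if_true, Finset.sum_const, Finset.card_univ, Fintype.card_prod,
    Fintype.card_fin, nsmul_eq_mul]
  push_cast
  ring

theorem sum_confChristoffel_mul_idWirtinger {m : ℕ} (ft : Cm m → ℝ) (l : Fin m × Fin 2)
    (x : Cm m) :
    ∑ j, ∑ k, ((confChristoffel ft l j k x : ℝ) : ℂ) * idWirtinger m j k
      = (((1 - m) / (4 * ft x) * pderiv' ft l x : ℝ) : ℂ) := by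
  have hΓ : ∀ j k, ((confChristoffel ft l j k x : ℝ) : ℂ)
      = ((1 / (2 * ft x) : ℝ) : ℂ) *
        ((if l = j then ((pderiv' ft k x : ℝ) : ℂ) else 0)
          + (if l = k then ((pderiv' ft j x : ℝ) : ℂ) else 0)
          - (if j = k then ((pderiv' ft l x : ℝ) : ℂ) else 0)) := by
    intro j k
    simp only [confChristoffel]
    push_cast [apply_ite Complex.ofReal]
    rfl
  simp only [hΓ, mul_assoc, ← Finset.mul_sum]
  rw [sum_sum_conformal_contraction (fun i => ((pderiv' ft i x : ℝ) : ℂ)),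
    sum_idWirtinger_diag]
  simp only [idWirtinger_add_swap, mul_ite, mul_zero, Finset.sum_ite_eq, Finset.mem_univ, if_true]
  push_cast
  ring

theorem tensionId_eq {m : ℕ} (f ft : Cm m → ℝ) (l : Fin m × Fin 2) (x : Cm m) :
    tensionId f ft l x = (((1 - m) / (4 * f x * ft x) * gradient ft x l : ℝ) : ℂ) := by
  rw [tensionId, sum_confChristoffel_mul_idWirtinger, pderiv'_eq_gradient]
  push_cast
  ring

theorem sqrt_mul_sum_normSq_tensionId {m : ℕ} (hm : 1 ≤ m) {f ft : Cm m → ℝ} {x : Cm m}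
    (hfx : 0 < f x) (hftx : 0 < ft x) :
    √(ft x * ∑ l, Complex.normSq (tensionId f ft l x))
      = (m - 1) / (4 * f x * ft x) * √(ft x) * ‖gradient ft x‖ := by
  have hm' : (0 : ℝ) ≤ m - 1 := by
    rw [sub_nonneg]
    exact_mod_cast hm
  have hsq : ft x * ∑ l, Complex.normSq (tensionId f ft l x)
      = ((m - 1) / (4 * f x * ft x) * √(ft x) * ‖gradient ft x‖) ^ 2 := by
    simp only [tensionId_eq, Complex.normSq_ofReal]
    rw [mul_pow, mul_pow, Real.sq_sqrt hftx.le, EuclideanSpace.real_norm_sq_eq, Finset.mul_sum,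
      Finset.mul_sum]
    exact Finset.sum_congr rfl fun l _ => by ring
  rw [hsq, Real.sqrt_sq (by positivity)]

theorem norm_gradient_sqrt {F : Type*} [NormedAddCommGroup F] [InnerProductSpace ℝ F]
    [CompleteSpace F] {h : F → ℝ} {x : F} (hx : 0 < h x) (hd : DifferentiableAt ℝ h x) :
    ‖gradient (fun y => √(h y)) x‖ = ‖gradient h x‖ / (2 * √(h x)) := by
  rw [(Real.hasDerivAt_sqrt hx.ne').gradient_comp hd, norm_smul,
    Real.norm_of_nonneg (by positivity)]
  ring

theorem norm_gradient_inv_sqrt {F : Type*} [NormedAddCommGroup F] [InnerProductSpace ℝ F]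
    [CompleteSpace F] {h : F → ℝ} {x : F} (hx : 0 < h x) (hd : DifferentiableAt ℝ h x) :
    ‖gradient (fun y => (√(h y))⁻¹) x‖ = ‖gradient h x‖ / (2 * h x * √(h x)) := by
  have hs : 0 < √(h x) := Real.sqrt_pos.mpr hx
  have hder : HasDerivAt (fun t => (√t)⁻¹) (-(1 / (2 * √(h x))) / √(h x) ^ 2) (h x) :=
    (Real.hasDerivAt_sqrt hx.ne').inv hs.ne'
  rw [hder.gradient_comp hd, norm_smul, norm_div, norm_neg,
    Real.norm_of_nonneg (by positivity), Real.norm_of_nonneg (by positivity), Real.sq_sqrt hx.le]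
  field_simp

theorem tension_of_identity_conformal_general (m : ℕ) (hm : 1 ≤ m) (Ω : Set (Cm m))
    (f ft : Cm m → ℝ)
    (hf : ∀ x ∈ Ω, 0 < f x) (hft : ∀ x ∈ Ω, 0 < ft x)
    (hftd : ∀ x ∈ Ω, DifferentiableAt ℝ ft x)
    (x : Cm m) (hx : x ∈ Ω) :
    Real.sqrt (ft x * ∑ l, Complex.normSq (tensionId f ft l x)) =
      ((m : ℝ) - 1) / (2 * f x) * ‖gradient (fun y => Real.sqrt (ft y)) x‖ ∧
    (f = ft →
      Real.sqrt (ft x * ∑ l, Complex.normSq (tensionId f ft l x)) =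
        ((m : ℝ) - 1) / 2 * ‖gradient (fun y => (Real.sqrt (f y))⁻¹) x‖) := by
  have hfx := hf x hx
  have hftx := hft x hx
  have hs : √(ft x) ^ 2 = ft x := Real.sq_sqrt hftx.le
  rw [sqrt_mul_sum_normSq_tensionId hm hfx hftx]
  refine ⟨?_, ?_⟩
  · rw [norm_gradient_sqrt hftx (hftd x hx)]
    field_simp
    rw [hs]
    ring
  · rintro rfl
    rw [norm_gradient_inv_sqrt hftx (hftd x hx)]
    field_simp
    rw [hs]
    ring

/-- For conformal metrics `γ = fδ`, `γ̃ = f̃δ` on an open set of `ℂᵐ`, the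
norm of the tension field of the identity map is
`‖σ(id)‖ = ((m−1)/(2f))|∇√f̃|`; in particular for `f = f̃` it equals
`((m−1)/2)|∇(1/√f)|`. -/
theorem tension_of_identity_conformal (m : ℕ) (hm : 1 ≤ m) (Ω : Set (Cm m))
    (hΩ : IsOpen Ω) (f ft : Cm m → ℝ)
    (hf : ∀ x ∈ Ω, 0 < f x) (hft : ∀ x ∈ Ω, 0 < ft x)
    (hfd : ∀ x ∈ Ω, DifferentiableAt ℝ f x)
    (hftd : ∀ x ∈ Ω, DifferentiableAt ℝ ft x)
    (x : Cm m) (hx : x ∈ Ω) :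
    Real.sqrt (ft x * ∑ l, Complex.normSq (tensionId f ft l x)) =
      ((m : ℝ) - 1) / (2 * f x) * ‖gradient (fun y => Real.sqrt (ft y)) x‖ ∧
    (f = ft →
      Real.sqrt (ft x * ∑ l, Complex.normSq (tensionId f ft l x)) =
        ((m : ℝ) - 1) / 2 * ‖gradient (fun y => (Real.sqrt (f y))⁻¹) x‖) :=
  tension_of_identity_conformal_general m hm Ω f ft hf hft hftd x hx

end
end

section
/- Let D : [r₀, ∞) → ℝ be a C² function with D' > 0, strictly increasing to infinity, satisfying |D''(r)|/(D'(r))² ≤ C D(r)^(−λ) for all large r, where λ > 1 and C > 0. Then D has linear growth: there exist constants 0 < C₄ < C₅ and C₆, C₇ such that C₄ r + C₆ ≤ D(r) ≤ C₅ r + C₇ for all large r. -/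
/-!
Along `[a, ∞)` the derivative of `log D'` is `D''/D'`, whose absolute value is at most
`C D^(-λ) D'`, the derivative of `-(C/(λ-1)) D^(1-λ)`. As `λ > 1` and `D > 0`, this primitive
increases by at most `(C/(λ-1)) D(a)^(1-λ)`, so `log D'` has bounded variation and `D'` is
pinched between two positive constants; the mean value inequality then gives linear growth.
-/

open Set Filter Topology Real

theorem monotoneOn_Ici_of_hasDerivAt_nonneg {f f' : ℝ → ℝ} {a : ℝ}
    (hf : ∀ x ∈ Ici a, HasDerivAt f (f' x) x) (hf' : ∀ x ∈ Ici a, 0 ≤ f' x) :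
    MonotoneOn f (Ici a) :=
  monotoneOn_of_hasDerivWithinAt_nonneg (convex_Ici a)
    (fun x hx => (hf x hx).continuousAt.continuousWithinAt)
    (fun x hx => (hf x (interior_subset hx)).hasDerivWithinAt)
    (fun x hx => hf' x (interior_subset hx))

theorem abs_sub_le_sub_of_abs_deriv_le {f f' g g' : ℝ → ℝ} {a : ℝ}
    (hf : ∀ x ∈ Ici a, HasDerivAt f (f' x) x) (hg : ∀ x ∈ Ici a, HasDerivAt g (g' x) x)
    (hfg : ∀ x ∈ Ici a, |f' x| ≤ g' x) {x : ℝ} (hx : a ≤ x) :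
    |f x - f a| ≤ g x - g a := by
  have hsub := monotoneOn_Ici_of_hasDerivAt_nonneg (fun x hx => (hg x hx).sub (hf x hx))
    (fun x hx => by linarith [(abs_le.mp (hfg x hx)).2])
  have hadd := monotoneOn_Ici_of_hasDerivAt_nonneg (fun x hx => (hg x hx).add (hf x hx))
    (fun x hx => by linarith [(abs_le.mp (hfg x hx)).1])
  have h₁ := hsub self_mem_Ici hx hx
  have h₂ := hadd self_mem_Ici hx hx
  simp only [Pi.sub_apply, Pi.add_apply] at h₁ h₂
  exact abs_le.mpr ⟨by linarith, by linarith⟩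

theorem mul_sub_le_sub_and_sub_le_mul_sub_of_deriv_mem_Icc {f f' : ℝ → ℝ} {a m M : ℝ}
    (hf : ∀ x ∈ Ici a, HasDerivAt f (f' x) x) (hf' : ∀ x ∈ Ici a, f' x ∈ Icc m M)
    {x : ℝ} (hx : a ≤ x) :
    m * (x - a) ≤ f x - f a ∧ f x - f a ≤ M * (x - a) := by
  have hlow := monotoneOn_Ici_of_hasDerivAt_nonneg
    (fun x hx => (hf x hx).sub ((hasDerivAt_id x).const_mul m))
    (fun x hx => by simp only [mul_one]; linarith [(hf' x hx).1])
  have hupp := monotoneOn_Ici_of_hasDerivAt_nonneg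
    (fun x hx => ((hasDerivAt_id x).const_mul M).sub (hf x hx))
    (fun x hx => by simp only [mul_one]; linarith [(hf' x hx).2])
  have h₁ := hlow self_mem_Ici hx hx
  have h₂ := hupp self_mem_Ici hx hx
  simp only [Pi.sub_apply, id] at h₁ h₂
  constructor <;> linarith

theorem abs_log_sub_le_of_abs_deriv_deriv_le {D D' D'' : ℝ → ℝ} {a C lam : ℝ} (hC : 0 ≤ C)
    (hlam : 1 < lam) (hD : ∀ x ∈ Ici a, HasDerivAt D (D' x) x)
    (hD' : ∀ x ∈ Ici a, HasDerivAt D' (D'' x) x)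
    (hpos : ∀ x ∈ Ici a, 0 < D x) (hpos' : ∀ x ∈ Ici a, 0 < D' x)
    (hD'' : ∀ x ∈ Ici a, |D'' x| ≤ C * D x ^ (-lam) * D' x ^ 2) {x : ℝ} (hx : a ≤ x) :
    |log (D' x) - log (D' a)| ≤ C / (lam - 1) * D a ^ (1 - lam) := by
  have hlam₁ : 0 < lam - 1 := by linarith
  have hlog : ∀ y ∈ Ici a, HasDerivAt (fun y => log (D' y)) (D'' y / D' y) y :=
    fun y hy => (hD' y hy).log (hpos' y hy).ne'
  have hprimitive : ∀ y ∈ Ici a,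
      HasDerivAt (fun y => -(C / (lam - 1)) * D y ^ (1 - lam)) (C * D y ^ (-lam) * D' y) y := by
    intro y hy
    refine (((hD y hy).rpow_const (Or.inl (hpos y hy).ne')).const_mul _).congr_deriv ?_
    rw [show 1 - lam - 1 = -lam by ring]
    field_simp
    ring
  have hbound : ∀ y ∈ Ici a, |D'' y / D' y| ≤ C * D y ^ (-lam) * D' y := by
    intro y hy
    rw [abs_div, abs_of_pos (hpos' y hy), div_le_iff₀ (hpos' y hy)]
    simpa [pow_two, mul_assoc] using hD'' y hy
  have hDx := hpos x hx
  calc |log (D' x) - log (D' a)|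
      ≤ -(C / (lam - 1)) * D x ^ (1 - lam) - -(C / (lam - 1)) * D a ^ (1 - lam) :=
        abs_sub_le_sub_of_abs_deriv_le hlog hprimitive hbound hx
    _ ≤ C / (lam - 1) * D a ^ (1 - lam) := by
        linarith [show 0 ≤ C / (lam - 1) * D x ^ (1 - lam) by positivity]

theorem mul_exp_neg_le_and_le_mul_exp_of_abs_log_sub_le {y z K : ℝ} (hy : 0 < y) (hz : 0 < z)
    (h : |log y - log z| ≤ K) : z * exp (-K) ≤ y ∧ y ≤ z * exp K := by
  obtain ⟨h₁, h₂⟩ := abs_le.mp h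
  constructor
  · calc z * exp (-K) = exp (log z - K) := by rw [sub_eq_add_neg, exp_add, exp_log hz]
      _ ≤ exp (log y) := exp_le_exp.mpr (by linarith)
      _ = y := exp_log hy
  · calc y = exp (log y) := (exp_log hy).symm
      _ ≤ exp (log z + K) := exp_le_exp.mpr (by linarith)
      _ = z * exp K := by rw [exp_add, exp_log hz]

theorem ContDiffOn.hasDerivAt_deriv {f : ℝ → ℝ} {s : Set ℝ} {x : ℝ} (hf : ContDiffOn ℝ 2 f s)
    (hs : s ∈ 𝓝 x) : HasDerivAt (deriv f) (deriv (deriv f) x) x :=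
  have hf' : ContDiffOn ℝ 1 (deriv f) (interior s) :=
    (hf.mono interior_subset).deriv_of_isOpen isOpen_interior (by norm_num)
  ((hf'.contDiffAt (isOpen_interior.mem_nhds (mem_interior_iff_mem_nhds.mpr hs))).differentiableAt
    one_ne_zero).hasDerivAt

theorem linear_growth_of_distance_general (r₀ C lam : ℝ) (hlam : 1 < lam) (hC : 0 < C)
    (D : ℝ → ℝ) (hD : ContDiffOn ℝ 2 D (Ici r₀))
    (hD' : ∀ r ∈ Ici r₀, 0 < deriv D r)
    (htop : Tendsto D atTop atTop)
    (hineq : ∃ R₀ ∈ Ici r₀, ∀ r ∈ Ici R₀,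
      |deriv (deriv D) r| / (deriv D r) ^ 2 ≤ C * (D r) ^ (-lam)) :
    ∃ C₄ C₅ C₆ C₇ R : ℝ, 0 < C₄ ∧ C₄ < C₅ ∧
      ∀ r ∈ Ici R, C₄ * r + C₆ ≤ D r ∧ D r ≤ C₅ * r + C₇ := by
  obtain ⟨R₀, -, hineq⟩ := hineq
  obtain ⟨R₁, hR₁⟩ := (htop.eventually_gt_atTop 0).exists_forall_of_atTop
  set a := max (max R₀ R₁) (r₀ + 1)
  have hnhds : ∀ x ∈ Ici a, Ici r₀ ∈ 𝓝 x := fun x hx =>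
    Ici_mem_nhds ((lt_add_one r₀).trans_le ((le_max_right _ _).trans hx))
  have hpos : ∀ x ∈ Ici a, 0 < D x := fun x hx =>
    hR₁ x ((le_max_right _ _).trans ((le_max_left _ _).trans hx))
  have hpos' : ∀ x ∈ Ici a, 0 < deriv D x := fun x hx => hD' x (mem_of_mem_nhds (hnhds x hx))
  have hD'' : ∀ x ∈ Ici a, |deriv (deriv D) x| ≤ C * D x ^ (-lam) * deriv D x ^ 2 :=
    fun x hx => (div_le_iff₀ (pow_pos (hpos' x hx) 2)).mp
      (hineq x (mem_Ici.mpr ((le_max_left _ _).trans ((le_max_left _ _).trans hx))))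
  have hDderiv : ∀ x ∈ Ici a, HasDerivAt D (deriv D x) x := fun x hx =>
    ((hD.contDiffAt (hnhds x hx)).differentiableAt two_ne_zero).hasDerivAt
  set K := C / (lam - 1) * D a ^ (1 - lam)
  have hderiv : ∀ x ∈ Ici a, deriv D x ∈ Icc (deriv D a * exp (-K)) (deriv D a * exp K) :=
    fun x hx => mul_exp_neg_le_and_le_mul_exp_of_abs_log_sub_le (hpos' x hx) (hpos' a self_mem_Ici)
      (abs_log_sub_le_of_abs_deriv_deriv_le hC.le hlam hDderiv
        (fun y hy => hD.hasDerivAt_deriv (hnhds y hy)) hpos hpos' hD'' hx)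
  have hK : 0 < K := by
    have := hpos a self_mem_Ici
    have : 0 < lam - 1 := by linarith
    positivity
  refine ⟨deriv D a * exp (-K), deriv D a * exp K, D a - deriv D a * exp (-K) * a,
    D a - deriv D a * exp K * a, a, mul_pos (hpos' a self_mem_Ici) (exp_pos _),
    mul_lt_mul_of_pos_left (exp_lt_exp.mpr (by linarith)) (hpos' a self_mem_Ici), fun r hr => ?_⟩
  have := mul_sub_le_sub_and_sub_le_mul_sub_of_deriv_mem_Icc hDderiv hderiv hr
  constructor <;> linarith

/-- Let `D` be `C²` on `[r₀,∞)` with `D' > 0`, `D → ∞`, and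
`|D''|/(D')² ≤ C·D^(−λ)` for all large `r`, where `λ > 1`, `C > 0`.
Then `D` has linear growth: `C₄r + C₆ ≤ D(r) ≤ C₅r + C₇` for large `r`,
with `0 < C₄ < C₅`. -/
theorem linear_growth_of_distance (r₀ C lam : ℝ) (hlam : 1 < lam) (hC : 0 < C)
    (D : ℝ → ℝ) (hD : ContDiffOn ℝ 2 D (Ici r₀))
    (hD' : ∀ r ∈ Ici r₀, 0 < deriv D r)
    (hmono : StrictMonoOn D (Ici r₀))
    (htop : Tendsto D atTop atTop)
    (hineq : ∃ R₀ ∈ Ici r₀, ∀ r ∈ Ici R₀,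
      |deriv (deriv D) r| / (deriv D r) ^ 2 ≤ C * (D r) ^ (-lam)) :
    ∃ C₄ C₅ C₆ C₇ R : ℝ, 0 < C₄ ∧ C₄ < C₅ ∧
      ∀ r ∈ Ici R, C₄ * r + C₆ ≤ D r ∧ D r ≤ C₅ * r + C₇ :=
  linear_growth_of_distance_general r₀ C lam hlam hC D hD hD' htop hineq
end

section
/- Let u : ℂᵐ × [0,T] → ℝ be bounded, C^{2,1}, satisfying (−(1+|x|²)Δ + ∂/∂t) u ≥ 0 and u(x,0) ≥ 0. Then u ≥ 0 on ℂᵐ × [0,T]. -/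
open Real Set
open Filter Topology

/-!
The barrier `v = e^{(2n+1)t} (1 + |x|²)` satisfies `(−(1+|x|²)Δ + ∂ₜ) v = v > 0`. For `ε > 0`,
`w = u + εv` is nonnegative for large `|x|` because `u` is bounded below, so if `w` were negative
somewhere it would attain a negative minimum on `ℝⁿ × [0, T]`, at a time `t₀ > 0` since
`w(·, 0) ≥ 0`. There `Δw ≥ 0` and `∂ₜw ≤ 0` (one-sided if `t₀ = T`), so the operator applied to
`w` is `≤ 0`, while it equals `(−(1+|x|²)Δ + ∂ₜ) u + εv > 0`. Letting `ε → 0` gives `u ≥ 0`.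
-/

theorem IsLocalMin.deriv_deriv_nonneg {f : ℝ → ℝ} {a : ℝ} (h : IsLocalMin f a)
    (hc : ContinuousAt f a) : 0 ≤ deriv (deriv f) a := by
  by_contra! hneg
  -- `f'' a < 0` makes `a` a local maximum as well, so `f` is locally constant there.
  have hconst : f =ᶠ[𝓝 a] fun _ => f a :=
    (h.and (isLocalMax_of_deriv_deriv_neg hneg h.deriv_eq_zero hc)).mono
      fun _ hx => le_antisymm hx.2 hx.1
  have : deriv (deriv f) a = 0 := by simp [hconst.deriv.deriv_eq]
  exact hneg.ne this

theorem IsLocalMinOn.derivWithin_Icc_nonpos {f : ℝ → ℝ} {a b t : ℝ}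
    (h : IsLocalMinOn f (Icc a b) t) (ht : t ∈ Ioc a b) : derivWithin f (Icc a b) t ≤ 0 := by
  have hcone : a - t ∈ posTangentConeAt (Icc a b) t := by
    apply sub_mem_posTangentConeAt_of_segment_subset
    rw [segment_symm, segment_eq_Icc ht.1.le]
    exact Icc_subset_Icc_right ht.2
  have hslope : fderivWithin ℝ f (Icc a b) t (a - t) = (a - t) * derivWithin f (Icc a b) t := by
    rw [← fderivWithin_derivWithin, ← smul_eq_mul, ← map_smul, smul_eq_mul, mul_one]
  have hnonneg := h.fderivWithin_nonneg hcone
  rw [hslope] at hnonneg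
  nlinarith [ht.1]

section LineDerivatives

variable {E : Type*} [NormedAddCommGroup E] [NormedSpace ℝ E] {f : E → ℝ}

theorem ContDiff.differentiable_fderiv_apply (hf : ContDiff ℝ 2 f) (e : E) :
    Differentiable ℝ fun y => fderiv ℝ f y e :=
  ((hf.fderiv_right (m := 1) le_rfl).differentiable one_ne_zero).clm_apply
    (differentiable_const e)

theorem ContDiff.deriv_deriv_comp_line (hf : ContDiff ℝ 2 f) (x e : E) :
    deriv (deriv fun s : ℝ => f (x + s • e)) 0 = fderiv ℝ (fun y => fderiv ℝ f y e) x e := by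
  have hline : ∀ s : ℝ, HasDerivAt (fun s : ℝ => x + s • e) e s := fun s => by
    simpa using ((hasDerivAt_id s).smul_const e).const_add x
  have hderiv : deriv (fun s : ℝ => f (x + s • e)) = fun s => fderiv ℝ f (x + s • e) e :=
    funext fun s =>
      ((hf.differentiable two_ne_zero _).hasFDerivAt.comp_hasDerivAt s (hline s)).deriv
  rw [hderiv]
  simpa only [zero_smul, add_zero, Function.comp_def] using
    ((hf.differentiable_fderiv_apply e _).hasFDerivAt.comp_hasDerivAt 0 (hline 0)).deriv

end LineDerivatives

section Laplacian

variable {n : ℕ} {f g : EuclideanSpace ℝ (Fin n) → ℝ} {x : EuclideanSpace ℝ (Fin n)}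

theorem laplacian_nonneg_of_isLocalMin (hf : ContDiff ℝ 2 f) (h : IsLocalMin f x) :
    0 ≤ laplacian f x := by
  refine Finset.sum_nonneg fun i _ => ?_
  set e : EuclideanSpace ℝ (Fin n) := EuclideanSpace.single i 1
  have hline : Continuous fun s : ℝ => x + s • e := by fun_prop
  have hmin : IsLocalMin f ((fun s : ℝ => x + s • e) 0) := by simpa using h
  rw [← hf.deriv_deriv_comp_line]
  exact (hmin.comp_continuous (g := fun s : ℝ => x + s • e) hline.continuousAt).deriv_deriv_nonneg
    (hf.continuous.comp hline).continuousAt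

theorem laplacian_add (hf : ContDiff ℝ 2 f) (hg : ContDiff ℝ 2 g) :
    laplacian (fun y => f y + g y) x = laplacian f x + laplacian g x := by
  rw [laplacian, laplacian, laplacian, ← Finset.sum_add_distrib]
  refine Finset.sum_congr rfl fun i _ => ?_
  have hfd := hf.differentiable two_ne_zero
  have hgd := hg.differentiable two_ne_zero
  simp only [fderiv_fun_add (hfd _) (hgd _), add_apply]
  rw [fderiv_fun_add (hf.differentiable_fderiv_apply _ x) (hg.differentiable_fderiv_apply _ x)]
  rfl

theorem laplacian_const_mul (hf : ContDiff ℝ 2 f) (c : ℝ) :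
    laplacian (fun y => c * f y) x = c * laplacian f x := by
  rw [laplacian, laplacian, Finset.mul_sum]
  refine Finset.sum_congr rfl fun i _ => ?_
  have hfd := hf.differentiable two_ne_zero
  simp only [fderiv_const_mul (hfd _), smul_apply, smul_eq_mul]
  rw [fderiv_const_mul (hf.differentiable_fderiv_apply _ x)]
  rfl

theorem laplacian_one_add_norm_sq : laplacian (fun y => 1 + ‖y‖ ^ 2) x = 2 * n := by
  have hpartial : ∀ i : Fin n, (fun y : EuclideanSpace ℝ (Fin n) =>
      fderiv ℝ (fun z => 1 + ‖z‖ ^ 2) y (EuclideanSpace.single i 1)) = fun y => 2 * y i := by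
    intro i
    funext y
    rw [(((hasStrictFDerivAt_norm_sq y).hasFDerivAt).const_add 1).fderiv]
    simp [EuclideanSpace.inner_single_right]
  have hsecond : ∀ i : Fin n, fderiv ℝ (fun y : EuclideanSpace ℝ (Fin n) => 2 * y i) x
      (EuclideanSpace.single i 1) = 2 := by
    intro i
    have hd : HasFDerivAt (fun y : EuclideanSpace ℝ (Fin n) => 2 * y i)
        ((2 : ℝ) • EuclideanSpace.proj i) x :=
      (EuclideanSpace.proj (𝕜 := ℝ) i).hasFDerivAt.const_mul 2
    simp [hd.fderiv]
  simp only [laplacian, hpartial, hsecond]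
  simp [mul_comm]

end Laplacian

section ConformalHeatOperator

noncomputable def conformalHeatOp {n : ℕ} (T : ℝ) (u : EuclideanSpace ℝ (Fin n) → ℝ → ℝ)
    (x : EuclideanSpace ℝ (Fin n)) (t : ℝ) : ℝ :=
  -(1 + ‖x‖ ^ 2) * laplacian (fun y => u y t) x + derivWithin (u x) (Icc 0 T) t

/-- The paper's barrier `(1 + |x|²) exp(2n t)` is annihilated by `conformalHeatOp`, because
`Δ (1 + |x|²) = 2n`; the rate `2n + 1` makes it a strict supersolution. -/
noncomputable def barrier (n : ℕ) (x : EuclideanSpace ℝ (Fin n)) (t : ℝ) : ℝ :=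
  exp ((2 * n + 1) * t) * (1 + ‖x‖ ^ 2)

variable {n : ℕ} {T t : ℝ} {x : EuclideanSpace ℝ (Fin n)}

theorem barrier_pos : 0 < barrier n x t := by
  unfold barrier; positivity

theorem one_add_norm_sq_le_barrier (ht : 0 ≤ t) : 1 + ‖x‖ ^ 2 ≤ barrier n x t :=
  le_mul_of_one_le_left (by positivity) (one_le_exp (by positivity))

theorem continuous_barrier :
    Continuous fun p : EuclideanSpace ℝ (Fin n) × ℝ => barrier n p.1 p.2 := by
  unfold barrier; fun_prop

theorem contDiff_barrier (t : ℝ) :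
    ContDiff ℝ 2 fun x : EuclideanSpace ℝ (Fin n) => barrier n x t :=
  contDiff_const.mul (contDiff_const.add (contDiff_norm_sq ℝ))

theorem hasDerivAt_barrier : HasDerivAt (barrier n x) ((2 * n + 1) * barrier n x t) t :=
  ((((hasDerivAt_id t).const_mul (2 * n + 1 : ℝ)).exp).mul_const (1 + ‖x‖ ^ 2)).congr_deriv
    (by simp only [barrier, id]; ring)

theorem conformalHeatOp_barrier (hT : 0 < T) (ht : t ∈ Icc 0 T) :
    conformalHeatOp T (barrier n) x t = barrier n x t := by
  have hlap : laplacian (fun y => barrier n y t) x = exp ((2 * n + 1) * t) * (2 * n) := by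
    have := laplacian_const_mul (x := x) ((contDiff_const (c := (1 : ℝ))).add (contDiff_norm_sq ℝ))
      (exp ((2 * n + 1) * t))
    rwa [laplacian_one_add_norm_sq] at this
  rw [conformalHeatOp, hlap,
    hasDerivAt_barrier.hasDerivWithinAt.derivWithin (uniqueDiffOn_Icc hT t ht)]
  simp only [barrier]; ring

theorem conformalHeatOp_add_const_mul {u v : EuclideanSpace ℝ (Fin n) → ℝ → ℝ}
    (hu : ContDiff ℝ 2 fun y => u y t) (hv : ContDiff ℝ 2 fun y => v y t)
    (hut : DifferentiableWithinAt ℝ (u x) (Icc 0 T) t)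
    (hvt : DifferentiableWithinAt ℝ (v x) (Icc 0 T) t) (c : ℝ) :
    conformalHeatOp T (fun y s => u y s + c * v y s) x t =
      conformalHeatOp T u x t + c * conformalHeatOp T v x t := by
  rw [conformalHeatOp, conformalHeatOp, conformalHeatOp,
    laplacian_add hu (contDiff_const.mul hv), laplacian_const_mul hv,
    derivWithin_fun_add hut (hvt.const_mul c), derivWithin_const_mul c hvt]
  ring

theorem conformalHeatOp_nonpos_of_isMinOn {w : EuclideanSpace ℝ (Fin n) → ℝ → ℝ}
    (hw : ContDiff ℝ 2 fun y => w y t)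
    (hmin : IsMinOn (fun p => w p.1 p.2) (univ ×ˢ Icc 0 T) (x, t)) (ht : t ∈ Ioc 0 T) :
    conformalHeatOp T w x t ≤ 0 := by
  have hspace : IsLocalMin (fun y => w y t) x :=
    IsMinOn.isLocalMin (s := univ)
      (isMinOn_iff.mpr fun y _ => isMinOn_iff.mp hmin (y, t) ⟨mem_univ y, Ioc_subset_Icc_self ht⟩)
      univ_mem
  have htime : IsLocalMinOn (w x) (Icc 0 T) t :=
    (isMinOn_iff.mpr fun s hs => isMinOn_iff.mp hmin (x, s) ⟨mem_univ x, hs⟩).localize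
  have hlap := laplacian_nonneg_of_isLocalMin hw hspace
  have hdt := htime.derivWithin_Icc_nonpos ht
  rw [conformalHeatOp]
  nlinarith [sq_nonneg ‖x‖]

end ConformalHeatOperator

theorem exists_isMinOn_univ_prod_Icc {E : Type*} [NormedAddCommGroup E] [ProperSpace E]
    {f : E × ℝ → ℝ} {a b R : ℝ} (hf : ContinuousOn f (univ ×ˢ Icc a b))
    (hfar : ∀ x, R < ‖x‖ → ∀ t ∈ Icc a b, 0 ≤ f (x, t)) {p : E × ℝ}
    (hp : p ∈ univ ×ˢ Icc a b) (hnonpos : f p ≤ 0) :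
    ∃ q ∈ univ ×ˢ Icc a b, IsMinOn f (univ ×ˢ Icc a b) q := by
  have hK : IsCompact (Metric.closedBall (0 : E) R ×ˢ Icc a b) :=
    (isCompact_closedBall 0 R).prod isCompact_Icc
  refine hf.exists_isMinOn' (isClosed_univ.prod isClosed_Icc) hp ?_
  filter_upwards [mem_inf_of_left hK.compl_mem_cocompact, mem_inf_of_right (mem_principal_self _)]
    with q hqK hq
  have hR : R < ‖q.1‖ := by
    by_contra! h
    exact hqK ⟨mem_closedBall_zero_iff.mpr h, hq.2⟩
  exact hnonpos.trans (hfar q.1 hR q.2 hq.2)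

theorem add_const_mul_barrier_nonneg {n : ℕ} {T M ε : ℝ} {u : EuclideanSpace ℝ (Fin n) → ℝ → ℝ}
    (hbdd : ∀ x, ∀ t ∈ Icc 0 T, -M ≤ u x t)
    (hcont : ContinuousOn (fun p : EuclideanSpace ℝ (Fin n) × ℝ => u p.1 p.2) (univ ×ˢ Icc 0 T))
    (hx2 : ∀ t ∈ Icc 0 T, ContDiff ℝ 2 fun x => u x t)
    (ht1 : ∀ x, DifferentiableOn ℝ (u x) (Icc 0 T))
    (hineq : ∀ x, ∀ t ∈ Icc 0 T, 0 ≤ conformalHeatOp T u x t)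
    (h0 : ∀ x, 0 ≤ u x 0) (hε : 0 < ε) :
    ∀ x, ∀ t ∈ Icc 0 T, 0 ≤ u x t + ε * barrier n x t := by
  by_contra! hneg
  obtain ⟨x₁, t₁, ht₁, hneg⟩ := hneg
  have hfar : ∀ x, √(M / ε) < ‖x‖ → ∀ t ∈ Icc 0 T, 0 ≤ u x t + ε * barrier n x t := by
    intro x hx t ht
    have hM : M ≤ ε * ‖x‖ ^ 2 := by
      have hsq := (Real.sqrt_le_iff.mp hx.le).2
      rwa [div_le_iff₀' hε] at hsq
    nlinarith [hbdd x t ht, one_add_norm_sq_le_barrier (n := n) (x := x) ht.1]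
  obtain ⟨⟨x₀, t₀⟩, hmem, hmin⟩ := exists_isMinOn_univ_prod_Icc
    (f := fun p => u p.1 p.2 + ε * barrier n p.1 p.2)
    (hcont.add (continuous_const.mul continuous_barrier).continuousOn) hfar
    (p := (x₁, t₁)) ⟨mem_univ _, ht₁⟩ hneg.le
  have ht₀ : t₀ ∈ Icc 0 T := hmem.2
  have hmin_neg : u x₀ t₀ + ε * barrier n x₀ t₀ < 0 :=
    (isMinOn_iff.mp hmin (x₁, t₁) ⟨mem_univ _, ht₁⟩).trans_lt hneg
  have ht₀pos : 0 < t₀ := by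
    refine ht₀.1.lt_of_ne fun h => hmin_neg.not_ge ?_
    rw [← h]
    exact add_nonneg (h0 x₀) (mul_pos hε barrier_pos).le
  have hT : 0 < T := ht₀pos.trans_le ht₀.2
  have hlin := conformalHeatOp_add_const_mul (hx2 t₀ ht₀) (contDiff_barrier t₀) (ht1 x₀ t₀ ht₀)
    hasDerivAt_barrier.differentiableAt.differentiableWithinAt ε
  have hnonpos := conformalHeatOp_nonpos_of_isMinOn (w := fun y s => u y s + ε * barrier n y s)
    ((hx2 t₀ ht₀).add (contDiff_const.mul (contDiff_barrier t₀))) hmin ⟨ht₀pos, ht₀.2⟩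
  rw [hlin, conformalHeatOp_barrier hT ht₀] at hnonpos
  nlinarith [hineq x₀ t₀ ht₀, mul_pos hε (barrier_pos (n := n) (x := x₀) (t := t₀))]

theorem conformal_parabolic_maximum_principle_general (m : ℕ) (T : ℝ)
    (u : EuclideanSpace ℝ (Fin (2 * m)) → ℝ → ℝ)
    (hbdd : ∃ M : ℝ, ∀ x, ∀ t ∈ Icc (0:ℝ) T, |u x t| ≤ M)
    (hcont : ContinuousOn (fun p : EuclideanSpace ℝ (Fin (2 * m)) × ℝ => u p.1 p.2)
      (univ ×ˢ Icc 0 T))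
    (hx2 : ∀ t ∈ Icc (0:ℝ) T, ContDiff ℝ 2 (fun x => u x t))
    (ht1 : ∀ x, DifferentiableOn ℝ (u x) (Icc 0 T))
    (hineq : ∀ x, ∀ t ∈ Icc (0:ℝ) T,
      0 ≤ -(1 + ‖x‖ ^ 2) * laplacian (fun y => u y t) x +
        derivWithin (u x) (Icc 0 T) t)
    (h0 : ∀ x, 0 ≤ u x 0) :
    ∀ x, ∀ t ∈ Icc (0:ℝ) T, 0 ≤ u x t := by
  obtain ⟨M, hM⟩ := hbdd
  intro x t ht
  refine le_of_forall_pos_le_add fun δ hδ => ?_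
  have hb : 0 < barrier (2 * m) x t := barrier_pos
  have := add_const_mul_barrier_nonneg (fun x t ht => neg_le_of_abs_le (hM x t ht)) hcont hx2 ht1
    hineq h0 (div_pos hδ hb) x t ht
  rwa [div_mul_cancel₀ δ hb.ne'] at this

/-- Parabolic maximum principle on `ℂᵐ ≅ ℝ^{2m}` for the operator
`−(1+|x|²)Δ + ∂_t`: a bounded `C^{2,1}` function `u` with
`(−(1+|x|²)Δ + ∂_t)u ≥ 0` and `u(·,0) ≥ 0` is nonnegative on
`ℝ^{2m} × [0,T]`. -/
theorem conformal_parabolic_maximum_principle (m : ℕ) (T : ℝ) (hT : 0 < T)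
    (u : EuclideanSpace ℝ (Fin (2 * m)) → ℝ → ℝ)
    (hbdd : ∃ M : ℝ, ∀ x, ∀ t ∈ Icc (0:ℝ) T, |u x t| ≤ M)
    (hcont : ContinuousOn (fun p : EuclideanSpace ℝ (Fin (2 * m)) × ℝ => u p.1 p.2)
      (univ ×ˢ Icc 0 T))
    (hx2 : ∀ t ∈ Icc (0:ℝ) T, ContDiff ℝ 2 (fun x => u x t))
    (ht1 : ∀ x, DifferentiableOn ℝ (u x) (Icc 0 T))
    (hineq : ∀ x, ∀ t ∈ Icc (0:ℝ) T,
      0 ≤ -(1 + ‖x‖ ^ 2) * laplacian (fun y => u y t) x +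
        derivWithin (u x) (Icc 0 T) t)
    (h0 : ∀ x, 0 ≤ u x 0) :
    ∀ x, ∀ t ∈ Icc (0:ℝ) T, 0 ≤ u x t :=
  conformal_parabolic_maximum_principle_general m T u hbdd hcont hx2 ht1 hineq h0
end
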